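/- Let 1 < α < 2 and n ≥ 1. Then ∑_{k=0}^{n} g_k^α > −1/n^α. -/

import Mathlib

/-- Grünwald–Letnikov coefficient `g_k^α = (-1)^k * binom(α,k)`. -/
noncomputable def gl (a : ℝ) (k : ℕ) : ℝ :=
  (-1 : ℝ) ^ k * (∏ j ∈ Finset.range k, (a - j)) / (Nat.factorial k : ℝ)

/-- Shifted Grünwald weights. -/
noncomputable def glw (a : ℝ) : ℕ → ℝ
  | 0 => a / 2 * gl a 0
  | (k+1) => a / 2 * gl a (k+1) + (2 - a) / 2 * gl a k

/-- Second-order Lubich coefficients `l_m^{2,γ}`. -/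
noncomputable def lub2 (g : ℝ) (m : ℕ) : ℝ :=
  (3/2 : ℝ) ^ g * ∑ k ∈ Finset.range (m+1), (1/3 : ℝ) ^ k * gl g k * gl g (m - k)

/-- The Toeplitz matrix `B_α` of size `(M-1) × (M-1)`. -/
noncomputable def Bmat (a : ℝ) (M : ℕ) : Matrix (Fin (M-1)) (Fin (M-1)) ℝ :=
  fun i j => if (j : ℕ) ≤ (i : ℕ) + 1 then glw a ((i : ℕ) + 1 - (j : ℕ)) else 0

/-- The symmetric matrix `A_α = B_α + B_αᵀ`. -/
noncomputable def Amat (a : ℝ) (M : ℕ) : Matrix (Fin (M-1)) (Fin (M-1)) ℝ :=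
  Bmat a M + (Bmat a M).transpose

/-!
Pascal's rule `g_{k}^α = g_{k}^{α-1} - g_{k-1}^{α-1}` telescopes the sum to `g_n^{α-1}`.
With `β = α - 1 ∈ (0, 1)`, the recurrence `g_{m+1}^β = (1 - (β+1)/(m+1)) g_m^β` has a positive
factor for `m ≥ 1`, and Bernoulli's inequality bounds that factor by `(m/(m+1))^(β+1)`; so the
lower bound `-1/m^(β+1)`, true at `m = 1` since `g_1^β = -β`, propagates by induction.
-/

lemma gl_zero (a : ℝ) : gl a 0 = 1 := by simp [gl]

lemma gl_succ (a : ℝ) (k : ℕ) : gl a (k + 1) = (1 - (a + 1) / (k + 1)) * gl a k := by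
  simp only [gl, Finset.prod_range_succ, Nat.factorial_succ, pow_succ]
  push_cast
  field_simp
  ring

lemma gl_one (a : ℝ) : gl a 1 = -a := by
  simp [gl_succ, gl_zero]

lemma prod_range_succ_sub_cast (a : ℝ) (k : ℕ) :
    ∏ j ∈ Finset.range (k + 1), (a - j) = a * ∏ j ∈ Finset.range k, (a - 1 - j) := by
  rw [Finset.prod_range_succ', mul_comm]
  push_cast
  simp only [sub_zero, sub_sub, add_comm (1 : ℝ)]

lemma gl_succ_eq_sub (a : ℝ) (k : ℕ) : gl a (k + 1) = gl (a - 1) (k + 1) - gl (a - 1) k := by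
  simp only [gl, prod_range_succ_sub_cast a k, Finset.prod_range_succ, Nat.factorial_succ,
    pow_succ]
  push_cast
  field_simp
  ring

lemma sum_range_succ_gl (a : ℝ) (n : ℕ) : ∑ k ∈ Finset.range (n + 1), gl a k = gl (a - 1) n := by
  induction n with
  | zero => simp [gl_zero]
  | succ n ih => rw [Finset.sum_range_succ, ih, gl_succ_eq_sub]; ring

lemma one_sub_div_le_div_rpow {m p : ℝ} (hm : 0 ≤ m) (hp : 1 ≤ p) :
    1 - p / (m + 1) ≤ (m / (m + 1)) ^ p := by
  have hm1 : 0 < m + 1 := by linarith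
  have hs : -1 ≤ -(1 / (m + 1)) := by
    rw [neg_le_neg_iff, div_le_one hm1]; linarith
  have hb := one_add_mul_self_le_rpow_one_add hs hp
  have he : 1 + -(1 / (m + 1)) = m / (m + 1) := by field_simp; ring
  rwa [he, mul_neg, mul_one_div, ← sub_eq_add_neg] at hb

lemma one_sub_div_mul_one_div_rpow_le {m p : ℝ} (hm : 0 < m) (hp : 1 ≤ p) :
    (1 - p / (m + 1)) * (1 / m ^ p) ≤ 1 / (m + 1) ^ p := by
  calc (1 - p / (m + 1)) * (1 / m ^ p)
      ≤ (m / (m + 1)) ^ p * (1 / m ^ p) := by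
        gcongr; exact one_sub_div_le_div_rpow hm.le hp
    _ = 1 / (m + 1) ^ p := by
        rw [Real.div_rpow hm.le (by linarith)]; field_simp

lemma neg_one_div_rpow_lt_gl {β : ℝ} (hβ0 : 0 ≤ β) (hβ1 : β < 1) {n : ℕ} (hn : 1 ≤ n) :
    -(1 / (n : ℝ) ^ (β + 1)) < gl β n := by
  induction n, hn using Nat.le_induction with
  | base => simp [gl_one, hβ1]
  | succ m hm ih =>
    have hm0 : (1 : ℝ) ≤ m := by exact_mod_cast hm
    have hc : 0 < 1 - (β + 1) / (m + 1) := by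
      rw [sub_pos, div_lt_one (by linarith)]; linarith
    push_cast
    calc -(1 / ((m : ℝ) + 1) ^ (β + 1))
        ≤ (1 - (β + 1) / (m + 1)) * -(1 / (m : ℝ) ^ (β + 1)) := by
          rw [mul_neg, neg_le_neg_iff]
          exact one_sub_div_mul_one_div_rpow_le (by linarith) (by linarith)
      _ < (1 - (β + 1) / (m + 1)) * gl β m := mul_lt_mul_of_pos_left ih hc
      _ = gl β (m + 1) := (gl_succ β m).symm

theorem stmt3 (α : ℝ) (hα1 : 1 < α) (hα2 : α < 2) (n : ℕ) (hn : 1 ≤ n) :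
    -(1 / (n : ℝ) ^ α) < ∑ k ∈ Finset.range (n+1), gl α k := by
  rw [sum_range_succ_gl]
  simpa using neg_one_div_rpow_lt_gl (β := α - 1) (by linarith) (by linarith) hn
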